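/- arXiv:quant-ph/0511069 — 3 statements merged into one kernel-verified Lean document; each statement's English description precedes it below -/
import Mathlib

section
/- For every finite simple graph G with at least one edge, tw(L(G)) ≤ Δ(G)·(tw(G) + 1) − 1, where L(G) is the line graph of G and Δ(G) is the maximum degree of a vertex of G. -/
/-- A tree decomposition of a finite simple graph `G`. -/
structure TreeDecomp {V : Type} [Fintype V] (G : SimpleGraph V) : Type 1 where
  ι : Type
  instFin : Fintype ι
  T : SimpleGraph ι
  isTree : T.IsTree
  bag : ι → Finset V
  bag_cover : ∀ v : V, ∃ t : ι, v ∈ bag t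
  bag_edge : ∀ u v : V, G.Adj u v → ∃ t : ι, u ∈ bag t ∧ v ∈ bag t
  bag_conn : ∀ v : V, (T.induce {t : ι | v ∈ bag t}).Connected

/-- The width of a tree decomposition: `max_t |B_t| - 1`. -/
noncomputable def TreeDecomp.width {V : Type} [Fintype V] {G : SimpleGraph V}
    (D : TreeDecomp G) : ℕ :=
  (@Finset.univ D.ι D.instFin).sup (fun t => (D.bag t).card) - 1

/-- The treewidth of a finite simple graph. -/
noncomputable def treewidth {V : Type} [Fintype V] (G : SimpleGraph V) : ℕ :=
  sInf {n : ℕ | ∃ D : TreeDecomp G, D.width = n}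

/-!
Given a tree decomposition `(T, B)` of `G`, replace each bag `B_t` by the set of edges with an
endpoint in `B_t`. Two adjacent edges share a vertex, which lies in some bag; the nodes whose new
bag contains the edge `uv` are those whose old bag contains `u` or `v`, a union of two subtrees
meeting at a node whose bag contains both ends. So this is a tree decomposition of `L(G)` on the
same tree, and each new bag has at most `Δ(G) · |B_t|` elements.
-/

namespace TreeDecomp

variable {V : Type} [Fintype V] {G : SimpleGraph V}

def single (G : SimpleGraph V) : TreeDecomp G where
  ι := Unit
  instFin := inferInstance
  T := ⊥
  isTree := ⟨.of_subsingleton, SimpleGraph.isAcyclic_bot⟩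
  bag _ := Finset.univ
  bag_cover _ := ⟨(), Finset.mem_univ _⟩
  bag_edge _ _ _ := ⟨(), Finset.mem_univ _, Finset.mem_univ _⟩
  bag_conn v := @SimpleGraph.Connected.of_subsingleton _ _ ⟨⟨(), Finset.mem_univ v⟩⟩ _

theorem exists_width_eq_treewidth (G : SimpleGraph V) :
    ∃ D : TreeDecomp G, D.width = treewidth G :=
  Nat.sInf_mem (⟨_, single G, rfl⟩ : {n | ∃ D : TreeDecomp G, D.width = n}.Nonempty)

theorem treewidth_le_width (D : TreeDecomp G) : treewidth G ≤ D.width :=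
  Nat.sInf_le ⟨D, rfl⟩

theorem card_bag_le_width_add_one (D : TreeDecomp G) (t : D.ι) :
    (D.bag t).card ≤ D.width + 1 := by
  let := D.instFin
  have := Finset.le_sup (f := fun t => (D.bag t).card) (Finset.mem_univ t)
  unfold width
  omega

theorem width_le_of_card_bag_le (D : TreeDecomp G) {n : ℕ} (h : ∀ t, (D.bag t).card ≤ n) :
    D.width ≤ n - 1 :=
  Nat.sub_le_sub_right (Finset.sup_le fun t _ => h t) 1

section LineGraph

variable [Fintype G.edgeSet] (D : TreeDecomp G)

open Classical in
noncomputable def lineGraphBag (t : D.ι) : Finset G.edgeSet :=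
  Finset.univ.filter fun e => ∃ v ∈ D.bag t, v ∈ (e : Sym2 V)

theorem mem_lineGraphBag {t : D.ι} {e : G.edgeSet} :
    e ∈ D.lineGraphBag t ↔ ∃ v ∈ D.bag t, v ∈ (e : Sym2 V) := by
  simp [lineGraphBag]

theorem setOf_mem_lineGraphBag {u v : V} (he : s(u, v) ∈ G.edgeSet) :
    {t | ⟨s(u, v), he⟩ ∈ D.lineGraphBag t} = {t | u ∈ D.bag t} ∪ {t | v ∈ D.bag t} := by
  ext t
  simp only [Set.mem_ofPred_eq, Set.mem_union, mem_lineGraphBag, Sym2.mem_iff]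
  constructor
  · rintro ⟨w, hw, rfl | rfl⟩
    exacts [Or.inl hw, Or.inr hw]
  · rintro (hu | hv)
    exacts [⟨u, hu, Or.inl rfl⟩, ⟨v, hv, Or.inr rfl⟩]

noncomputable def lineGraph : TreeDecomp G.lineGraph where
  ι := D.ι
  instFin := D.instFin
  T := D.T
  isTree := D.isTree
  bag := D.lineGraphBag
  bag_cover e := by
    obtain ⟨v, hv⟩ : ∃ v, v ∈ (e : Sym2 V) := ⟨_, Sym2.out_fst_mem _⟩
    obtain ⟨t, ht⟩ := D.bag_cover v
    exact ⟨t, D.mem_lineGraphBag.2 ⟨v, ht, hv⟩⟩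
  bag_edge e f hef := by
    obtain ⟨-, v, hve, hvf⟩ := SimpleGraph.lineGraph_adj_iff_exists.1 hef
    obtain ⟨t, ht⟩ := D.bag_cover v
    exact ⟨t, D.mem_lineGraphBag.2 ⟨v, ht, hve⟩, D.mem_lineGraphBag.2 ⟨v, ht, hvf⟩⟩
  bag_conn e := by
    obtain ⟨e, he⟩ := e
    induction e using Sym2.ind with | h u v => ?_
    obtain ⟨t, hu, hv⟩ := D.bag_edge u v (G.mem_edgeSet.1 he)
    rw [D.setOf_mem_lineGraphBag he]
    exact SimpleGraph.induce_union_connected (D.bag_conn u).preconnected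
      (D.bag_conn v).preconnected ⟨t, hu, hv⟩

theorem card_lineGraphBag_le [DecidableRel G.Adj] (t : D.ι) :
    (D.lineGraphBag t).card ≤ G.maxDegree * (D.bag t).card := by
  classical
  have hsub : (D.lineGraphBag t).map (Function.Embedding.subtype _) ⊆
      (D.bag t).biUnion fun v => G.incidenceFinset v := by
    intro x hx
    obtain ⟨e, he, rfl⟩ := Finset.mem_map.1 hx
    obtain ⟨v, hv, hve⟩ := D.mem_lineGraphBag.1 he
    exact Finset.mem_biUnion.2 ⟨v, hv, (G.mem_incidenceFinset v _).2 ⟨e.2, hve⟩⟩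
  calc (D.lineGraphBag t).card
      = ((D.lineGraphBag t).map (Function.Embedding.subtype _)).card := (Finset.card_map _).symm
    _ ≤ ((D.bag t).biUnion fun v => G.incidenceFinset v).card := Finset.card_le_card hsub
    _ ≤ (D.bag t).card * G.maxDegree := Finset.card_biUnion_le_card_mul _ _ _ fun v _ =>
        (G.card_incidenceFinset_eq_degree v).trans_le (G.degree_le_maxDegree v)
    _ = G.maxDegree * (D.bag t).card := Nat.mul_comm _ _

theorem width_lineGraph_le [DecidableRel G.Adj] :
    D.lineGraph.width ≤ G.maxDegree * (D.width + 1) - 1 :=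
  D.lineGraph.width_le_of_card_bag_le fun t =>
    (D.card_lineGraphBag_le t).trans (Nat.mul_le_mul_left _ (D.card_bag_le_width_add_one t))

end LineGraph

end TreeDecomp

theorem treewidth_lineGraph_le_general
    {V : Type} [Fintype V] (G : SimpleGraph V) [DecidableRel G.Adj] :
    treewidth G.lineGraph ≤ G.maxDegree * (treewidth G + 1) - 1 := by
  obtain ⟨D, hD⟩ := TreeDecomp.exists_width_eq_treewidth G
  calc treewidth G.lineGraph ≤ D.lineGraph.width := D.lineGraph.treewidth_le_width
    _ ≤ G.maxDegree * (D.width + 1) - 1 := D.width_lineGraph_le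
    _ = G.maxDegree * (treewidth G + 1) - 1 := by rw [hD]

/-- For every finite simple graph `G` with at least one edge,
`tw(L(G)) ≤ Δ(G)·(tw(G) + 1) - 1`. -/
theorem treewidth_lineGraph_le
    {V : Type} [Fintype V] [DecidableEq V] (G : SimpleGraph V) [DecidableRel G.Adj]
    (hE : G.edgeFinset.Nonempty) :
    treewidth G.lineGraph ≤ G.maxDegree * (treewidth G + 1) - 1 :=
  treewidth_lineGraph_le_general G
end

section
/- Let d ≥ 1 be an integer and let G be a finite simple graph with at least one edge, no isolated vertices, and maximum degree Δ(G) ≤ d. Then tw(G) ≤ 2·cc(G) + 1 and cc(G) ≤ d·(tw(G) + 1) − 1. -/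
/-- The degree of the merged vertex created when, after the edges in `done` (which ends with
the edge `e` just contracted) have been contracted, we count the edges of `G` not yet
contracted having at least one endpoint in the connected component (of the spanning subgraph
with edge set `done`) containing the endpoints of `e`. -/
noncomputable def mergedDeg {V : Type} (G : SimpleGraph V) (done : List (Sym2 V))
    (e : Sym2 V) : ℕ :=
  Set.ncard {f : Sym2 V | f ∈ G.edgeSet ∧ f ∉ done ∧
    ∃ x ∈ f, ∃ y ∈ e, (SimpleGraph.fromEdgeSet {g : Sym2 V | g ∈ done}).Reachable x y}

/-- The complexity of a contraction ordering, given as a list of edges: the maximum over all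
steps `i` of the degree of the vertex obtained by contracting the `i`-th edge. -/
noncomputable def listComplexity {V : Type} (G : SimpleGraph V) (l : List (Sym2 V)) : ℕ :=
  Finset.univ.sup (fun i : Fin l.length => mergedDeg G (l.take (i + 1)) (l.get i))

/-- `l` is an ordering of the edge set of `G`. -/
def IsEdgeOrder {V : Type} (G : SimpleGraph V) (l : List (Sym2 V)) : Prop :=
  l.Nodup ∧ ∀ e : Sym2 V, e ∈ l ↔ e ∈ G.edgeSet

/-- The contraction complexity of `G`: the minimum complexity of a contraction ordering. -/
noncomputable def cc {V : Type} (G : SimpleGraph V) : ℕ :=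
  sInf {n : ℕ | ∃ l : List (Sym2 V), IsEdgeOrder G l ∧ listComplexity G l = n}

/-!
For `tw ≤ 2 cc + 1`, take an optimal contraction ordering and make one node per step `i`, whose
parent is the first later step whose component contains `C_i`. The bag of step `i` consists of
the vertices of `C_i` still incident with an uncontracted edge; they lie on `e_i` or on one of the
at most `cc` edges counted at step `i`, and the steps whose bag contains a given vertex form a
chain of parents.

For `cc ≤ d (tw + 1) - 1`, root an optimal tree decomposition, let the depth of a vertex be that
of its highest bag, and contract the edges in order of decreasing depth of their shallower endpoint.
When `e_i` is contracted, with shallower endpoint `v₀`, all edges contracted so far join vertices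
at least as deep as `v₀`, so every bag meeting `C_i` lies below the top bag of `v₀`, and every
uncontracted edge leaving `C_i` meets that bag. It has at most `tw + 1` vertices, each of degree
at most `d`, and one of the edges at them is `e_i` itself.
-/

open SimpleGraph Finset

lemma List.Nodup.get_mem_take_iff {α : Type*} {l : List α} (hl : l.Nodup) (i : Fin l.length)
    (n : ℕ) : l.get i ∈ l.take n ↔ (i : ℕ) < n := by
  rw [List.mem_take_iff_getElem]
  constructor
  · rintro ⟨j, hj, hji⟩
    rw [List.get_eq_getElem, hl.getElem_inj_iff] at hji
    omega
  · exact fun h => ⟨i, by omega, rfl⟩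

lemma List.get_mem_take_succ {α : Type*} (l : List α) (i : Fin l.length) :
    l.get i ∈ l.take (i + 1) :=
  List.mem_take_iff_getElem.2 ⟨i, by omega, rfl⟩

lemma List.Pairwise.rel_get_of_mem_take {α : Type*} {R : α → α → Prop} {l : List α}
    (hR : ∀ a, R a a) (hl : l.Pairwise R) (i : Fin l.length) {f : α}
    (hf : f ∈ l.take (i + 1)) : R f (l.get i) := by
  obtain ⟨j, hj, rfl⟩ := List.mem_take_iff_getElem.1 hf
  rcases Nat.lt_or_ge j i with hji | hji
  · exact List.pairwise_iff_getElem.1 hl j i _ i.2 hji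
  · obtain rfl : j = i := by omega
    exact hR _

lemma List.Pairwise.rel_get_of_notMem_take {α : Type*} {R : α → α → Prop} {l : List α}
    (hl : l.Pairwise R) (i : Fin l.length) {f : α} (hf : f ∈ l) (hf' : f ∉ l.take (i + 1)) :
    R (l.get i) f := by
  refine hl.rel_of_mem_take_of_mem_drop (l.get_mem_take_succ i) ?_
  rw [← List.take_append_drop (i + 1) l, List.mem_append] at hf
  exact hf.resolve_left hf'

namespace SimpleGraph

lemma reachable_fromEdgeSet_of_mem {V : Type*} {s : Set (Sym2 V)} {e : Sym2 V}
    (he : e ∈ s) {x y : V} (hx : x ∈ e) (hy : y ∈ e) : (fromEdgeSet s).Reachable x y := by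
  by_cases hxy : x = y
  · exact hxy ▸ .rfl
  · obtain rfl := (Sym2.mem_and_mem_iff hxy).1 ⟨hx, hy⟩
    exact ((fromEdgeSet_adj s).2 ⟨he, hxy⟩).reachable

section ParentGraph

variable {ι : Type*} (par : ι → ι)

def parentGraph : SimpleGraph ι := fromRel fun a b => par a = b

variable {par}

lemma parentGraph_adj {a b : ι} :
    (parentGraph par).Adj a b ↔ a ≠ b ∧ (par a = b ∨ par b = a) :=
  fromRel_adj _ a b

variable [Preorder ι]

lemma card_edgeSet_parentGraph {root : ι} (hroot : par root = root)
    (hpar : ∀ a, a ≠ root → a < par a) :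
    Nat.card (parentGraph par).edgeSet = Nat.card {a // a ≠ root} := by
  let toEdge : {a // a ≠ root} → (parentGraph par).edgeSet := fun a =>
    ⟨s(a.1, par a.1), parentGraph_adj.2 ⟨(hpar a.1 a.2).ne, Or.inl rfl⟩⟩
  refine (Nat.card_congr (Equiv.ofBijective toEdge ⟨?_, ?_⟩)).symm
  · rintro ⟨a, ha⟩ ⟨b, hb⟩ hab
    have hab := congrArg Subtype.val hab
    simp only [toEdge, Sym2.eq_iff] at hab
    rcases hab with ⟨rfl, -⟩ | ⟨hab, hba⟩
    · rfl
    · have hab' := hpar a ha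
      have hba' := hpar b hb
      rw [hba] at hab'
      rw [← hab] at hba'
      exact absurd (hab'.trans hba') (lt_irrefl a)
  · rintro ⟨e, he⟩
    induction e using Sym2.inductionOn with
    | hf x y =>
      obtain ⟨hxy, hpxy | hpyx⟩ := parentGraph_adj.1 ((mem_edgeSet _).1 he)
      · exact ⟨⟨x, fun h => hxy (by rw [← hpxy, h, hroot])⟩,
          Subtype.ext (by simp [toEdge, hpxy])⟩
      · exact ⟨⟨y, fun h => hxy (by rw [← hpyx, h, hroot])⟩,
          Subtype.ext (by simp [toEdge, hpyx, Sym2.eq_swap])⟩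

variable [WellFoundedGT ι]

lemma parentGraph_induce_connected {S : Set ι} {m : ι} (hm : m ∈ S)
    (hS : ∀ a ∈ S, a ≠ m → a < par a ∧ par a ∈ S) :
    ((parentGraph par).induce S).Connected := by
  have reach : ∀ a (ha : a ∈ S),
      ((parentGraph par).induce S).Reachable ⟨a, ha⟩ ⟨m, hm⟩ := by
    intro a
    induction a using WellFoundedGT.induction with
    | _ a ih =>
      intro ha
      by_cases ham : a = m
      · subst ham; rfl
      obtain ⟨hlt, hpar⟩ := hS a ha ham
      have hadj : ((parentGraph par).induce S).Adj ⟨a, ha⟩ ⟨par a, hpar⟩ :=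
        parentGraph_adj.2 ⟨hlt.ne, Or.inl rfl⟩
      exact hadj.reachable.trans (ih _ hlt hpar)
  rw [connected_iff_exists_forall_reachable]
  exact ⟨⟨m, hm⟩, fun ⟨a, ha⟩ => (reach a ha).symm⟩

lemma parentGraph_connected {root : ι} (hpar : ∀ a, a ≠ root → a < par a) :
    (parentGraph par).Connected := by
  have h := parentGraph_induce_connected (S := Set.univ) (Set.mem_univ root)
    fun a _ ha => ⟨hpar a ha, Set.mem_univ _⟩
  rw [connected_iff_exists_forall_reachable]
  exact ⟨root, fun a => (h.preconnected ⟨root, trivial⟩ ⟨a, trivial⟩).map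
    (Embedding.induce Set.univ).toHom⟩

lemma parentGraph_isTree [Finite ι] {root : ι} (hroot : par root = root)
    (hpar : ∀ a, a ≠ root → a < par a) : (parentGraph par).IsTree := by
  have := Fintype.ofFinite ι
  classical
  rw [isTree_iff_connected_and_card, card_edgeSet_parentGraph hroot hpar,
    Nat.card_eq_fintype_card, Nat.card_eq_fintype_card, Fintype.card_subtype_compl,
    Fintype.card_subtype_eq]
  have : 0 < Fintype.card ι := Fintype.card_pos_iff.2 ⟨root⟩
  exact ⟨parentGraph_connected hpar, by omega⟩

end ParentGraph

section Descendant

variable {ι : Type*} {T : SimpleGraph ι}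

/-- With `r` as the root, `z` lies in the subtree below `t`: every walk from `r` to `z`
passes through `t`. -/
def IsDescendant (T : SimpleGraph ι) (r t z : ι) : Prop := ∀ w : T.Walk r z, t ∈ w.support

lemma isDescendant_self (r t : ι) : T.IsDescendant r t t := fun w => w.end_mem_support

lemma IsDescendant.dist_add_dist_le {r t z : ι} (h : T.IsDescendant r t z)
    (hrz : T.Reachable r z) : T.dist r t + T.dist t z ≤ T.dist r z := by
  classical
  obtain ⟨w, hw⟩ := hrz.exists_walk_length_eq_dist
  have hsplit := congrArg Walk.length (w.take_spec (h w))
  rw [Walk.length_append] at hsplit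
  have := dist_le (w.takeUntil t (h w))
  have := dist_le (w.dropUntil t (h w))
  omega

lemma IsDescendant.mem_support_of_dist_le (hT : T.Connected) {r t s u : ι}
    (hs : T.IsDescendant r t s) (p : T.Walk s u) (hu : T.dist r u ≤ T.dist r t) :
    t ∈ p.support := by
  by_contra ht
  have hut : T.IsDescendant r t u := fun q => by
    simpa [Walk.mem_support_append_iff, ht] using hs (q.append p.reverse)
  have := hut.dist_add_dist_le (hT r u)
  obtain rfl : t = u := (hT.dist_eq_zero_iff).1 (by omega)
  exact ht p.end_mem_support

/-- In a tree, leaving the subtree below `t` means stepping from `t` to its parent. -/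
lemma IsDescendant.of_adj (hT : T.IsTree) {r t z z' : ι} (h : T.IsDescendant r t z)
    (hadj : T.Adj z z') (hdist : T.dist r t ≤ T.dist r z') : T.IsDescendant r t z' := by
  classical
  intro w
  have hw := h (w.concat hadj.symm)
  rw [Walk.support_concat, List.mem_append, List.mem_singleton] at hw
  rcases hw with hw | rfl
  · exact hw
  obtain ⟨q, hq, hqlen⟩ := (hT.connected r t).exists_path_of_dist
  have hz' : z' ∉ q.support := fun hz' => by
    have := dist_le (q.takeUntil z' hz')
    have := q.length_takeUntil_le_length hz'
    exact hT.dist_ne_of_adj r hadj (by omega)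
  exact w.support_bypass_subset_support
    (hT.isAcyclic.mem_support_of_ne_mem_support_of_adj_of_isPath w.bypass_isPath hq hadj.symm hz')

variable {S : Set ι}

lemma IsDescendant.of_induce_preconnected {r t s : ι} (hst : T.IsDescendant r t s)
    (hT : T.IsTree) (hS : (T.induce S).Preconnected) (hs : s ∈ S)
    (hdeep : ∀ u ∈ S, T.dist r t ≤ T.dist r u) {u : ι} (hu : u ∈ S) :
    T.IsDescendant r t u := by
  have key : ∀ x y : S, Relation.ReflTransGen (T.induce S).Adj x y →
      T.IsDescendant r t x → T.IsDescendant r t y := by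
    intro x y hxy
    induction hxy with
    | refl => exact id
    | tail _ hadj ih => exact fun hx => (ih hx).of_adj hT hadj (hdeep _ (Subtype.prop _))
  exact key ⟨s, hs⟩ ⟨u, hu⟩ ((reachable_iff_reflTransGen _ _).1 (hS _ _)) hst

lemma IsDescendant.mem_of_induce_preconnected {r t s u : ι} (hst : T.IsDescendant r t s)
    (hT : T.Connected) (hS : (T.induce S).Preconnected) (hs : s ∈ S) (hu : u ∈ S)
    (hut : T.dist r u ≤ T.dist r t) : t ∈ S := by
  obtain ⟨p⟩ := hS ⟨s, hs⟩ ⟨u, hu⟩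
  have ht : t ∈ (p.map (Embedding.induce S).toHom).support :=
    hst.mem_support_of_dist_le hT _ hut
  rw [Walk.support_map, List.mem_map] at ht
  obtain ⟨x, -, rfl⟩ := ht
  exact x.2

end Descendant

end SimpleGraph

section Basics

variable {V : Type} {G : SimpleGraph V}

lemma TreeDecomp.card_bag_le_width_add_one_s7 [Fintype V] (D : TreeDecomp G) (t : D.ι) :
    #(D.bag t) ≤ D.width + 1 := by
  have := @Finset.le_sup _ _ _ _ (@Finset.univ D.ι D.instFin) (fun t => #(D.bag t)) t
    (@Finset.mem_univ _ D.instFin t)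
  unfold TreeDecomp.width
  omega

lemma treewidth_le_of_card_bag_le [Fintype V] (D : TreeDecomp G) {k : ℕ}
    (h : ∀ t, #(D.bag t) ≤ k + 1) : treewidth G ≤ k := by
  have : D.width ≤ k := by
    have := @Finset.sup_le _ _ _ _ (@Finset.univ D.ι D.instFin) (fun t => #(D.bag t)) (k + 1)
      (fun t _ => h t)
    unfold TreeDecomp.width
    omega
  exact (Nat.sInf_le (s := {n | ∃ D : TreeDecomp G, D.width = n}) ⟨D, rfl⟩).trans this

noncomputable def TreeDecomp.single_s7 [Fintype V] (G : SimpleGraph V) : TreeDecomp G where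
  ι := Unit
  instFin := inferInstance
  T := ⊥
  isTree := .of_subsingleton
  bag _ := Finset.univ
  bag_cover v := ⟨(), Finset.mem_univ v⟩
  bag_edge u v _ := ⟨(), Finset.mem_univ u, Finset.mem_univ v⟩
  bag_conn v :=
    have : Nonempty {_t : Unit | v ∈ Finset.univ} := ⟨⟨(), Finset.mem_univ v⟩⟩
    IsTree.of_subsingleton.connected

lemma exists_treeDecomp_card_bag_le_treewidth [Fintype V] (G : SimpleGraph V) :
    ∃ D : TreeDecomp G, ∀ t, #(D.bag t) ≤ treewidth G + 1 := by
  obtain ⟨D, hD⟩ := Nat.sInf_mem (s := {n | ∃ D : TreeDecomp G, D.width = n})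
    ⟨_, TreeDecomp.single_s7 G, rfl⟩
  exact ⟨D, fun t => (D.card_bag_le_width_add_one_s7 t).trans_eq (congrArg (· + 1) hD)⟩

def mergedEdges (G : SimpleGraph V) (done : List (Sym2 V)) (e : Sym2 V) : Set (Sym2 V) :=
  {f | f ∈ G.edgeSet ∧ f ∉ done ∧
    ∃ x ∈ f, ∃ y ∈ e, (fromEdgeSet {g : Sym2 V | g ∈ done}).Reachable x y}

lemma mergedDeg_eq_ncard (G : SimpleGraph V) (done : List (Sym2 V)) (e : Sym2 V) :
    mergedDeg G done e = (mergedEdges G done e).ncard :=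
  rfl

lemma mergedDeg_le_listComplexity (G : SimpleGraph V) (l : List (Sym2 V)) (i : Fin l.length) :
    mergedDeg G (l.take (i + 1)) (l.get i) ≤ listComplexity G l :=
  Finset.le_sup (f := fun i : Fin l.length => mergedDeg G (l.take (i + 1)) (l.get i))
    (Finset.mem_univ i)

lemma cc_le_listComplexity {l : List (Sym2 V)} (hl : IsEdgeOrder G l) :
    cc G ≤ listComplexity G l :=
  Nat.sInf_le ⟨l, hl, rfl⟩

lemma exists_isEdgeOrder_listComplexity_eq_cc [Finite V] (G : SimpleGraph V) :
    ∃ l, IsEdgeOrder G l ∧ listComplexity G l = cc G :=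
  Nat.sInf_mem (s := {n | ∃ l, IsEdgeOrder G l ∧ listComplexity G l = n})
    ⟨_, G.edgeSet.toFinite.toFinset.toList, ⟨Finset.nodup_toList _, fun e => by simp⟩, rfl⟩

end Basics

section Contraction

variable {V : Type} (l : List (Sym2 V))

/-- The set `C_i` of the ordering `l`. -/
def stepComponent (i : Fin l.length) : Set V :=
  {x | ∃ y ∈ l.get i, (fromEdgeSet {g | g ∈ l.take (i + 1)}).Reachable x y}

variable {l}

lemma mem_stepComponent_of_mem {i : Fin l.length} {x : V} (hx : x ∈ l.get i) :
    x ∈ stepComponent l i :=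
  ⟨x, hx, .rfl⟩

lemma stepComponent_subset {i j : Fin l.length} (hij : i ≤ j) {z : V}
    (hzi : z ∈ stepComponent l i) (hzj : z ∈ stepComponent l j) :
    stepComponent l i ⊆ stepComponent l j := by
  have hmono : fromEdgeSet {g | g ∈ l.take (i + 1)} ≤ fromEdgeSet {g | g ∈ l.take (j + 1)} :=
    fromEdgeSet_mono fun g hg => List.take_subset_take_left l (by omega) hg
  obtain ⟨y, hy, hzy⟩ := hzi
  obtain ⟨y', hy', hzy'⟩ := hzj
  rintro x ⟨y'', hy'', hxy''⟩
  have hxz := hxy''.trans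
    ((reachable_fromEdgeSet_of_mem (l.get_mem_take_succ i) hy'' hy).trans hzy.symm)
  exact ⟨y', hy', (hxz.mono hmono).trans hzy'⟩

variable (l)

/-- The first later step whose component contains `C_i`; `Finset.min` makes it the root `⊤` if
there is none. -/
noncomputable def stepParent (i : Fin l.length) : WithTop (Fin l.length) :=
  open Classical in
  (univ.filter fun j => i < j ∧ stepComponent l i ⊆ stepComponent l j).min

variable {l}

lemma coe_lt_stepParent (i : Fin l.length) : (i : WithTop (Fin l.length)) < stepParent l i := by
  classical
  unfold stepParent
  cases h : (univ.filter fun j => i < j ∧ stepComponent l i ⊆ stepComponent l j).min with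
  | top => exact WithTop.coe_lt_top i
  | coe j => exact WithTop.coe_lt_coe.2 (mem_filter.1 (mem_of_min h)).2.1

lemma stepParent_le {i j : Fin l.length} (hij : i < j)
    (hsub : stepComponent l i ⊆ stepComponent l j) : stepParent l i ≤ j := by
  classical
  exact min_le (mem_filter.2 ⟨mem_univ _, hij, hsub⟩)

lemma stepComponent_subset_of_stepParent_eq {i j : Fin l.length} (h : stepParent l i = j) :
    stepComponent l i ⊆ stepComponent l j := by
  classical
  exact (mem_filter.1 (mem_of_min h)).2.2

variable (l)

noncomputable def contractionParent : WithTop (Fin l.length) → WithTop (Fin l.length)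
  | ⊤ => ⊤
  | (i : Fin l.length) => stepParent l i

noncomputable def contractionBag [Fintype V] : WithTop (Fin l.length) → Finset V
  | ⊤ => ∅
  | (i : Fin l.length) =>
    open Classical in
    univ.filter fun v => v ∈ stepComponent l i ∧ ∃ j, i ≤ j ∧ v ∈ l.get j

variable {l}

lemma contractionParent_isTree : (parentGraph (contractionParent l)).IsTree :=
  parentGraph_isTree (root := ⊤) rfl fun
    | ⊤, h => absurd rfl h
    | (i : Fin l.length), _ => coe_lt_stepParent i

variable [Fintype V]

lemma mem_contractionBag {i : Fin l.length} {v : V} :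
    v ∈ contractionBag l i ↔ v ∈ stepComponent l i ∧ ∃ j, i ≤ j ∧ v ∈ l.get j := by
  classical
  simp [contractionBag]

variable {G : SimpleGraph V}

lemma card_contractionBag_le (hl : IsEdgeOrder G l) (a : WithTop (Fin l.length)) :
    #(contractionBag l a) ≤ 2 * listComplexity G l + 2 := by
  classical
  cases a with
  | top => simp [contractionBag]
  | coe i =>
    set F := (mergedEdges G (l.take (i + 1)) (l.get i)).toFinite.toFinset
    have hF : #F ≤ listComplexity G l :=
      (Set.ncard_eq_toFinset_card _ _).symm.trans_le
        ((mergedDeg_eq_ncard G _ _).symm.trans_le (mergedDeg_le_listComplexity G l i))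
    have hsub : contractionBag l i ⊆ (insert (l.get i) F).biUnion Sym2.toFinset := by
      intro v hv
      obtain ⟨hvC, j, hij, hvj⟩ := mem_contractionBag.1 hv
      simp only [mem_biUnion, mem_insert, Sym2.mem_toFinset]
      rcases hij.lt_or_eq with hij | rfl
      · refine ⟨l.get j, Or.inr ?_, hvj⟩
        rw [Set.Finite.mem_toFinset]
        exact ⟨(hl.2 _).1 (List.get_mem l j), by rw [hl.1.get_mem_take_iff]; omega, v, hvj, hvC⟩
      · exact ⟨_, Or.inl rfl, hvj⟩
    calc #(contractionBag l i)
        ≤ #((insert (l.get i) F).biUnion Sym2.toFinset) := card_le_card hsub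
      _ ≤ #(insert (l.get i) F) * 2 :=
          card_biUnion_le_card_mul _ _ _ fun f _ => by rw [Sym2.card_toFinset]; split <;> omega
      _ ≤ (#F + 1) * 2 := Nat.mul_le_mul_right _ (card_insert_le _ _)
      _ ≤ 2 * listComplexity G l + 2 := by omega

lemma exists_mem_contractionBag_of_adj (hl : IsEdgeOrder G l) {u v : V} (huv : G.Adj u v) :
    ∃ a, u ∈ contractionBag l a ∧ v ∈ contractionBag l a := by
  obtain ⟨i, hi⟩ := List.mem_iff_get.1 ((hl.2 _).2 ((mem_edgeSet G).2 huv))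
  have hu : u ∈ l.get i := hi ▸ Sym2.mem_mk_left u v
  have hv : v ∈ l.get i := hi ▸ Sym2.mem_mk_right u v
  exact ⟨i, mem_contractionBag.2 ⟨mem_stepComponent_of_mem hu, i, le_rfl, hu⟩,
    mem_contractionBag.2 ⟨mem_stepComponent_of_mem hv, i, le_rfl, hv⟩⟩

/-- The steps whose bag contains `v` form a chain of parents ending at the last step `m` at
which an edge at `v` is contracted. -/
lemma contractionBag_connected (hl : IsEdgeOrder G l) {v : V} (hv : ∃ u, G.Adj u v) :
    ((parentGraph (contractionParent l)).induce {a | v ∈ contractionBag l a}).Connected := by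
  classical
  obtain ⟨u, huv⟩ := hv
  obtain ⟨a, -, hva⟩ := exists_mem_contractionBag_of_adj hl huv
  set J := univ.filter fun j : Fin l.length => v ∈ l.get j
  have hJ : J.Nonempty := by
    cases a with
    | top => simp [contractionBag] at hva
    | coe i =>
      obtain ⟨-, j, -, hj⟩ := mem_contractionBag.1 hva
      exact ⟨j, mem_filter.2 ⟨mem_univ _, hj⟩⟩
  set m := J.max' hJ
  have hvm : v ∈ l.get m := (mem_filter.1 (J.max'_mem hJ)).2
  have hle_m : ∀ j, v ∈ l.get j → j ≤ m := fun j hj =>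
    J.le_max' j (mem_filter.2 ⟨mem_univ _, hj⟩)
  refine parentGraph_induce_connected (m := (m : WithTop (Fin l.length)))
    (mem_contractionBag.2 ⟨mem_stepComponent_of_mem hvm, m, le_rfl, hvm⟩) ?_
  intro a ha ham
  cases a with
  | top => simp [contractionBag] at ha
  | coe i =>
    obtain ⟨hvi, j, hij, hvj⟩ := mem_contractionBag.1 ha
    have him : i < m := lt_of_le_of_ne (hij.trans (hle_m j hvj)) (fun h => ham (h ▸ rfl))
    have hpar := stepParent_le him
      (stepComponent_subset him.le hvi (mem_stepComponent_of_mem hvm))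
    refine ⟨coe_lt_stepParent i, ?_⟩
    obtain ⟨t, ht⟩ := WithTop.ne_top_iff_exists.1 (ne_top_of_le_ne_top WithTop.coe_ne_top hpar)
    change v ∈ contractionBag l (stepParent l i)
    rw [← ht, mem_contractionBag]
    exact ⟨stepComponent_subset_of_stepParent_eq ht.symm hvi, m,
      WithTop.coe_le_coe.1 (ht ▸ hpar), hvm⟩

noncomputable def contractionTreeDecomp (hiso : ∀ v : V, ∃ u : V, G.Adj u v)
    (hl : IsEdgeOrder G l) : TreeDecomp G where
  ι := WithTop (Fin l.length)
  instFin := inferInstance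
  T := parentGraph (contractionParent l)
  isTree := contractionParent_isTree
  bag := contractionBag l
  bag_cover v :=
    have ⟨_, huv⟩ := hiso v
    have ⟨a, _, hva⟩ := exists_mem_contractionBag_of_adj hl huv
    ⟨a, hva⟩
  bag_edge _ _ := exists_mem_contractionBag_of_adj hl
  bag_conn v := contractionBag_connected hl (hiso v)

theorem treewidth_le_two_mul_cc_add_one (hiso : ∀ v : V, ∃ u : V, G.Adj u v) :
    treewidth G ≤ 2 * cc G + 1 := by
  obtain ⟨l, hl, hcc⟩ := exists_isEdgeOrder_listComplexity_eq_cc G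
  exact treewidth_le_of_card_bag_le (contractionTreeDecomp hiso hl) fun a =>
    (card_contractionBag_le hl a).trans_eq (by rw [hcc])

end Contraction

lemma exists_isEdgeOrder_pairwise {V : Type} [Finite V] (G : SimpleGraph V) (κ : Sym2 V → ℕ) :
    ∃ l, IsEdgeOrder G l ∧ l.Pairwise fun e f => κ f ≤ κ e := by
  refine ⟨G.edgeSet.toFinite.toFinset.toList.mergeSort fun e f => κ f ≤ κ e,
    ⟨List.nodup_mergeSort.2 (nodup_toList _), fun e => by simp [List.mem_mergeSort]⟩, ?_⟩
  simpa using List.pairwise_mergeSort (le := fun e f => decide (κ f ≤ κ e))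
    (fun a b c => by simp only [decide_eq_true_eq]; omega)
    (fun a b => by simp only [Bool.or_eq_true, decide_eq_true_eq]; omega) _

namespace TreeDecomp

variable {V : Type} [Fintype V] {G : SimpleGraph V} (D : TreeDecomp G) (r : D.ι)

noncomputable def top (v : V) : D.ι :=
  Function.argminOn (D.T.dist r) {t | v ∈ D.bag t} (D.bag_cover v)

noncomputable def depth (v : V) : ℕ := D.T.dist r (D.top r v)

noncomputable def edgeDepth : Sym2 V → ℕ :=
  Sym2.lift ⟨fun a b => min (D.depth r a) (D.depth r b), fun _ _ => min_comm _ _⟩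

lemma mem_bag_top (v : V) : v ∈ D.bag (D.top r v) :=
  Function.argminOn_mem (D.T.dist r) {t | v ∈ D.bag t} _

variable {D r}

lemma depth_le_dist {v : V} {t : D.ι} (h : v ∈ D.bag t) : D.depth r v ≤ D.T.dist r t :=
  Function.argminOn_le (D.T.dist r) {t | v ∈ D.bag t} h

@[simp]
lemma edgeDepth_mk (a b : V) : D.edgeDepth r s(a, b) = min (D.depth r a) (D.depth r b) := rfl

lemma exists_mem_depth_eq_edgeDepth (e : Sym2 V) : ∃ v ∈ e, D.depth r v = D.edgeDepth r e := by
  induction e using Sym2.inductionOn with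
  | hf a b =>
    rcases min_choice (D.depth r a) (D.depth r b) with h | h
    · exact ⟨a, Sym2.mem_mk_left a b, by simp [h]⟩
    · exact ⟨b, Sym2.mem_mk_right a b, by simp [h]⟩

lemma isDescendant_of_mem_bag {v₀ c : V} {s₀ s : D.ι} (hc : D.depth r v₀ ≤ D.depth r c)
    (hs₀ : c ∈ D.bag s₀) (hdesc : D.T.IsDescendant r (D.top r v₀) s₀)
    (hs : c ∈ D.bag s) :
    D.T.IsDescendant r (D.top r v₀) s :=
  hdesc.of_induce_preconnected D.isTree (D.bag_conn c).preconnected hs₀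
    (fun _ hu => hc.trans (depth_le_dist hu)) hs

lemma isDescendant_of_reachable {H : SimpleGraph V} (hHG : H ≤ G) {v₀ : V}
    (hH : ∀ a b, H.Adj a b → D.depth r v₀ ≤ D.depth r a) {x : V} (hx : H.Reachable v₀ x)
    {s : D.ι} (hs : x ∈ D.bag s) : D.T.IsDescendant r (D.top r v₀) s := by
  replace hx := (reachable_iff_reflTransGen _ _).1 hx
  induction hx generalizing s with
  | refl => exact isDescendant_of_mem_bag le_rfl (D.mem_bag_top r v₀) (isDescendant_self _ _) hs
  | tail _ hadj ih =>
    obtain ⟨s', hbs', hcs'⟩ := D.bag_edge _ _ (hHG hadj)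
    exact isDescendant_of_mem_bag (hH _ _ hadj.symm) hcs' (ih hbs') hs

lemma mem_bag_top_of_reachable {H : SimpleGraph V} (hHG : H ≤ G) {v₀ : V}
    (hH : ∀ a b, H.Adj a b → D.depth r v₀ ≤ D.depth r a) {x z : V} (hx : H.Reachable v₀ x)
    {s : D.ι} (hxs : x ∈ D.bag s) (hzs : z ∈ D.bag s) (hz : D.depth r z ≤ D.depth r v₀) :
    z ∈ D.bag (D.top r v₀) :=
  (isDescendant_of_reachable hHG hH hx hxs).mem_of_induce_preconnected D.isTree.connected
    (D.bag_conn z).preconnected hzs (D.mem_bag_top r z) hz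

lemma exists_mem_bag_top_of_mem_mergedEdges {l : List (Sym2 V)} (hl : IsEdgeOrder G l)
    (hsort : l.Pairwise fun e f => D.edgeDepth r f ≤ D.edgeDepth r e) (i : Fin l.length)
    {v₀ : V} (hv₀ : v₀ ∈ l.get i) (hv₀i : D.depth r v₀ = D.edgeDepth r (l.get i))
    {f : Sym2 V}
    (hf : f ∈ mergedEdges G (l.take (i + 1)) (l.get i)) :
    ∃ z ∈ f, z ∈ D.bag (D.top r v₀) := by
  obtain ⟨hfG, hfi, x, hxf, y, hy, hxy⟩ := hf
  have hHG : fromEdgeSet {g | g ∈ l.take (i + 1)} ≤ G := fun a b hab =>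
    (hl.2 _).1 (List.mem_of_mem_take ((fromEdgeSet_adj _).1 hab).1)
  have hH : ∀ a b, (fromEdgeSet {g | g ∈ l.take (i + 1)}).Adj a b →
      D.depth r v₀ ≤ D.depth r a := fun a b hab => by
    have := hsort.rel_get_of_mem_take (R := fun e f => D.edgeDepth r f ≤ D.edgeDepth r e)
      (fun _ => le_rfl) i ((fromEdgeSet_adj _).1 hab).1
    simp only [edgeDepth_mk] at this
    omega
  have hv₀x := (reachable_fromEdgeSet_of_mem (l.get_mem_take_succ i) hv₀ hy).trans hxy.symm
  obtain ⟨z, rfl⟩ := Sym2.mem_iff_exists.1 hxf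
  obtain ⟨s, hxs, hzs⟩ := D.bag_edge x z hfG
  have hmin := hsort.rel_get_of_notMem_take i ((hl.2 _).2 hfG) hfi
  rw [edgeDepth_mk, ← hv₀i, min_le_iff] at hmin
  rcases hmin with hx | hz
  · exact ⟨x, Sym2.mem_mk_left x z, mem_bag_top_of_reachable hHG hH hv₀x hxs hxs hx⟩
  · exact ⟨z, Sym2.mem_mk_right x z, mem_bag_top_of_reachable hHG hH hv₀x hxs hzs hz⟩

variable [DecidableRel G.Adj]

lemma card_biUnion_incidenceFinset_le [DecidableEq V] {d : ℕ} (hdeg : ∀ v, G.degree v ≤ d)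
    (B : Finset V) : #(B.biUnion fun v => G.incidenceFinset v) ≤ #B * d :=
  card_biUnion_le_card_mul _ _ _ fun v _ => (G.card_incidenceFinset_eq_degree v).trans_le (hdeg v)

lemma mergedDeg_le {d c : ℕ} (hdeg : ∀ v, G.degree v ≤ d) (hc : ∀ t, #(D.bag t) ≤ c)
    {l : List (Sym2 V)} (hl : IsEdgeOrder G l)
    (hsort : l.Pairwise fun e f => D.edgeDepth r f ≤ D.edgeDepth r e) (i : Fin l.length) :
    mergedDeg G (l.take (i + 1)) (l.get i) ≤ d * c - 1 := by
  classical
  obtain ⟨v₀, hv₀, hv₀i⟩ := D.exists_mem_depth_eq_edgeDepth (r := r) (l.get i)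
  set B := D.bag (D.top r v₀)
  have hsub : mergedEdges G (l.take (i + 1)) (l.get i) ⊆
      ↑((B.biUnion fun v => G.incidenceFinset v).erase (l.get i)) := by
    intro f hf
    obtain ⟨z, hzf, hzB⟩ := exists_mem_bag_top_of_mem_mergedEdges hl hsort i hv₀ hv₀i hf
    rw [coe_erase, Set.mem_sdiff, Set.mem_singleton_iff, mem_coe, mem_biUnion]
    exact ⟨⟨z, hzB, (G.mem_incidenceFinset z f).2 ⟨hf.1, hzf⟩⟩,
      fun h => hf.2.1 (h ▸ l.get_mem_take_succ i)⟩
  have hei : l.get i ∈ B.biUnion fun v => G.incidenceFinset v :=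
    mem_biUnion.2 ⟨v₀, D.mem_bag_top r v₀,
      (G.mem_incidenceFinset v₀ _).2 ⟨(hl.2 _).1 (List.get_mem l i), hv₀⟩⟩
  calc mergedDeg G (l.take (i + 1)) (l.get i)
      ≤ #((B.biUnion fun v => G.incidenceFinset v).erase (l.get i)) :=
        (mergedDeg_eq_ncard G _ _).trans_le
          ((Set.ncard_le_ncard hsub).trans_eq (Set.ncard_coe_finset _))
    _ = #(B.biUnion fun v => G.incidenceFinset v) - 1 := card_erase_of_mem hei
    _ ≤ #B * d - 1 := Nat.sub_le_sub_right (card_biUnion_incidenceFinset_le hdeg B) 1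
    _ ≤ d * c - 1 := Nat.sub_le_sub_right (by rw [mul_comm]; exact Nat.mul_le_mul_left d (hc _)) 1

end TreeDecomp

theorem cc_le_mul_treewidth_add_one_sub_one {V : Type} [Fintype V] {G : SimpleGraph V}
    [DecidableRel G.Adj] {d : ℕ} (hdeg : ∀ v, G.degree v ≤ d) :
    cc G ≤ d * (treewidth G + 1) - 1 := by
  obtain ⟨D, hD⟩ := exists_treeDecomp_card_bag_le_treewidth G
  obtain ⟨r⟩ := D.isTree.connected.nonempty
  obtain ⟨l, hl, hsort⟩ := exists_isEdgeOrder_pairwise G (D.edgeDepth r)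
  exact (cc_le_listComplexity hl).trans
    (Finset.sup_le fun i _ => TreeDecomp.mergedDeg_le hdeg hD hl hsort i)

theorem treewidth_cc_bounds_general
    {V : Type} [Fintype V] (G : SimpleGraph V) [DecidableRel G.Adj]
    (d : ℕ) (hiso : ∀ v : V, ∃ u : V, G.Adj u v) (hΔ : G.maxDegree ≤ d) :
    treewidth G ≤ 2 * cc G + 1 ∧ cc G ≤ d * (treewidth G + 1) - 1 :=
  ⟨treewidth_le_two_mul_cc_add_one hiso,
    cc_le_mul_treewidth_add_one_sub_one fun v => (G.degree_le_maxDegree v).trans hΔ⟩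

/-- Let `d ≥ 1` and let `G` be a finite simple graph with at least one
edge, no isolated vertices, and maximum degree `Δ(G) ≤ d`.  Then `tw(G) ≤ 2·cc(G) + 1` and
`cc(G) ≤ d·(tw(G) + 1) - 1`. -/
theorem treewidth_cc_bounds
    {V : Type} [Fintype V] [DecidableEq V] (G : SimpleGraph V) [DecidableRel G.Adj]
    (d : ℕ) (hd : 1 ≤ d) (hE : G.edgeFinset.Nonempty)
    (hiso : ∀ v : V, ∃ u : V, G.Adj u v) (hΔ : G.maxDegree ≤ d) :
    treewidth G ≤ 2 * cc G + 1 ∧ cc G ≤ d * (treewidth G + 1) - 1 :=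
  treewidth_cc_bounds_general G d hiso hΔ
end

section
/- Let G' be a finite simple graph on an n-element vertex set, let u ∈ V(G'), and let the neighborhood of u in G' be partitioned as N(u) = A ⊔ A'. Let Ḡ be the induced subgraph of G' on V(G')∖{u}, and let G be the simple graph on vertex set (V(G')∖{u}) ∪ {v, w, v'} (three new vertices) whose edges are the edges of Ḡ together with {v,a} for each a ∈ A, {v',a'} for each a' ∈ A', and {v,w}, {w,v'}. Then contracting qubit w of |G⟩ against |−⟩ gives ⟨−|_w |G⟩ = (1/2)·( |1⟩_v |0⟩_{v'} ⊗ Z[A] |Ḡ⟩ + |0⟩_v |1⟩_{v'} ⊗ Z[A'] |Ḡ⟩ ), where |b⟩_v |b'⟩_{v'} ⊗ |S'⟩ denotes the computational basis state of the qubits (V(G')∖{u}) ∪ {v,v'} in which v has value b, v' has value b', and the remaining qubits are given by S' ⊆ V(G')∖{u}. -/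
/-- The number of edges of `H` with both endpoints in `S`. -/
noncomputable def edgesIn {W : Type} (H : SimpleGraph W) (S : Finset W) : ℕ :=
  Set.ncard {e : Sym2 W | e ∈ H.edgeSet ∧ ∀ x ∈ e, x ∈ S}

/-- The graph state `|H⟩ = 2^{-m/2} ∑_{S ⊆ W} (-1)^{e(S)} |S⟩`, given by its coordinates in
the computational basis indexed by the subsets `S` of the vertex set. -/
noncomputable def graphState {W : Type} [Fintype W] (H : SimpleGraph W) : Finset W → ℂ :=
  fun S => (-1 : ℂ) ^ edgesIn H S / ((Real.sqrt 2 : ℝ) : ℂ) ^ Fintype.card W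

/-- Contraction of the qubit `w` against `|+⟩ = (|0⟩ + |1⟩)/√2`: the linear map sending each
basis state `|S⟩` to `2^{-1/2} |S \ {w}⟩`, expressed on coordinates. -/
noncomputable def contractPlus {W : Type} [DecidableEq W] (w : W)
    (ψ : Finset W → ℂ) : Finset {x : W // x ≠ w} → ℂ :=
  fun S =>
    (ψ (S.map (Function.Embedding.subtype fun x => x ≠ w)) +
     ψ (insert w (S.map (Function.Embedding.subtype fun x => x ≠ w)))) /
      ((Real.sqrt 2 : ℝ) : ℂ)

/-- Contraction of the qubit `w` against `|−⟩ = (|0⟩ − |1⟩)/√2`: the linear map sending each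
basis state `|S⟩` to `2^{-1/2} (−1)^{[w ∈ S]} |S \ {w}⟩`, expressed on coordinates. -/
noncomputable def contractMinus {W : Type} [DecidableEq W] (w : W)
    (ψ : Finset W → ℂ) : Finset {x : W // x ≠ w} → ℂ :=
  fun S =>
    (ψ (S.map (Function.Embedding.subtype fun x => x ≠ w)) -
     ψ (insert w (S.map (Function.Embedding.subtype fun x => x ≠ w)))) /
      ((Real.sqrt 2 : ℝ) : ℂ)

/-- The diagonal operator `Z[B]`, sending `|S⟩` to `(-1)^{|B ∩ S|} |S⟩`. -/
noncomputable def Zop {U : Type} [DecidableEq U] (B : Finset U) (φ : Finset U → ℂ) :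
    Finset U → ℂ :=
  fun S => (-1 : ℂ) ^ (B ∩ S).card * φ S

/-- The vertex set `(V(G') \ {u}) ∪ {v, w, v'}`: the three new vertices `v`, `w`, `v'` are
`Sum.inr 0`, `Sum.inr 1`, `Sum.inr 2` respectively. -/
abbrev BigVert (V' : Type) (u : V') : Type := {x : V' // x ≠ u} ⊕ Fin 3

/-- The relation generating the graph `G`: the edges of the induced subgraph of `G'` on
`V(G') \ {u}`, together with `{v, a}` for `a ∈ A`, `{v', a'}` for `a' ∈ A'`, and the path
edges `{v, w}`, `{w, v'}`. -/
def bigRel {V' : Type} (G' : SimpleGraph V') (u : V') (A A' : Finset V') :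
    BigVert V' u → BigVert V' u → Prop
  | Sum.inl a, Sum.inl b => G'.Adj a.val b.val
  | Sum.inl a, Sum.inr i => (i = 0 ∧ a.val ∈ A) ∨ (i = 2 ∧ a.val ∈ A')
  | Sum.inr i, Sum.inr j => (i = 0 ∧ j = 1) ∨ (i = 1 ∧ j = 2)
  | Sum.inr _, Sum.inl _ => False

/-- The graph `G` obtained from `G'` by replacing the vertex `u` by the path `v - w - v'`,
with `v` adjacent to the neighbors of `u` in `A` and `v'` to those in `A'`. -/
def bigG {V' : Type} (G' : SimpleGraph V') (u : V') (A A' : Finset V') :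
    SimpleGraph (BigVert V' u) := SimpleGraph.fromRel (bigRel G' u A A')

/-- The inserted middle vertex `w`. -/
abbrev wVert (V' : Type) (u : V') : BigVert V' u := Sum.inr 1

/-- The vertex set after contracting the qubit `w`. -/
abbrev RemVert (V' : Type) (u : V') : Type := {x : BigVert V' u // x ≠ wVert V' u}

/-- The inserted vertex `v`, as a vertex of the remaining qubits. -/
def vVert (V' : Type) (u : V') : RemVert V' u :=
  ⟨Sum.inr 0, fun h => absurd (Sum.inr.inj h) (by decide)⟩

/-- The inserted vertex `v'`, as a vertex of the remaining qubits. -/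
def v'Vert (V' : Type) (u : V') : RemVert V' u :=
  ⟨Sum.inr 2, fun h => absurd (Sum.inr.inj h) (by decide)⟩

/-- The restriction of a subset `T` of the remaining qubits to the qubits `V(G') \ {u}`. -/
def restrictT {V' : Type} [Fintype V'] [DecidableEq V'] (u : V')
    (T : Finset (RemVert V' u)) : Finset {x : V' // x ≠ u} :=
  Finset.univ.filter (fun a : {x : V' // x ≠ u} =>
    (⟨Sum.inl a, Sum.inl_ne_inr⟩ : RemVert V' u) ∈ T)

/-- `extendVV u bv bv' φ` is the state `|bv⟩_v |bv'⟩_{v'} ⊗ φ` on the qubits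
`(V(G') \ {u}) ∪ {v, v'}`, expressed on coordinates. -/
noncomputable def extendVV {V' : Type} [Fintype V'] [DecidableEq V'] (u : V')
    (bv bv' : Bool) (φ : Finset {x : V' // x ≠ u} → ℂ) : Finset (RemVert V' u) → ℂ :=
  fun T =>
    if ((vVert V' u ∈ T) ↔ bv = true) ∧ ((v'Vert V' u ∈ T) ↔ bv' = true) then
      φ (restrictT u T)
    else 0

/-! Since `w ∉ S`, `e(S ∪ {w}) = e(S) + |N(w) ∩ S|`, so the coordinate of `⟨−|_w |G⟩` at `S` is
proportional to `(−1)^{e(S)} (1 − (−1)^{|N(w) ∩ S|})`. In `G` we have `N(w) = {v, v'}`, so the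
coordinate vanishes unless exactly one of `v`, `v'` lies in `S`. If it is `v`, the edges of `G`
inside `S` are those of `Ḡ` together with the edges from `v` to `A ∩ S`, which is the sign
`(−1)^{|A ∩ S|}` of `Z[A]`; symmetrically for `v'` and `A'`. -/

open Finset

lemma edgesIn_insert {W : Type} [Fintype W] [DecidableEq W] (H : SimpleGraph W)
    [DecidableRel H.Adj] {w : W} {S : Finset W} (hw : w ∉ S) :
    edgesIn H (insert w S) = edgesIn H S + #{x ∈ S | H.Adj w x} := by
  have hsplit : {e : Sym2 W | e ∈ H.edgeSet ∧ ∀ x ∈ e, x ∈ insert w S}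
      = {e | e ∈ H.edgeSet ∧ ∀ x ∈ e, x ∈ S} ∪ Sym2.mkEmbedding w '' ↑{x ∈ S | H.Adj w x} := by
    ext e
    induction e using Sym2.ind with
    | h x y =>
      simp only [Set.mem_ofPred_eq, SimpleGraph.mem_edgeSet, Sym2.mem_iff, forall_eq_or_imp,
        forall_eq, mem_insert, Set.mem_union, Set.mem_image, coe_filter,
        Sym2.mkEmbedding_apply, Sym2.eq_iff]
      grind [SimpleGraph.Adj.symm, SimpleGraph.irrefl]
  have hdisj : Disjoint {e : Sym2 W | e ∈ H.edgeSet ∧ ∀ x ∈ e, x ∈ S}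
      (Sym2.mkEmbedding w '' ↑{x ∈ S | H.Adj w x}) := by
    rw [Set.disjoint_right]
    rintro _ ⟨x, -, rfl⟩ ⟨-, hS⟩
    exact hw (hS w (Sym2.mem_mk_left w x))
  rw [edgesIn, hsplit, Set.ncard_union_eq hdisj,
    Set.ncard_image_of_injective _ (Sym2.mkEmbedding w).injective, Set.ncard_coe_finset, edgesIn]

lemma edgesIn_map {U W : Type} (H : SimpleGraph W) (f : U ↪ W) (S : Finset U) :
    edgesIn H (S.map f) = edgesIn (H.comap f) S := by
  have hpre : {e : Sym2 U | e ∈ (H.comap f).edgeSet ∧ ∀ x ∈ e, x ∈ S}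
      = Sym2.map f ⁻¹' {e | e ∈ H.edgeSet ∧ ∀ x ∈ e, x ∈ S.map f} := by
    ext e
    induction e using Sym2.ind with
    | h x y => simp [mem_map]
  have hrange : {e : Sym2 W | e ∈ H.edgeSet ∧ ∀ x ∈ e, x ∈ S.map f} ⊆ Set.range (Sym2.map f) := by
    rintro e ⟨-, he⟩
    induction e using Sym2.ind with
    | h x y =>
      obtain ⟨a, -, rfl⟩ := mem_map.mp (he x (Sym2.mem_mk_left x y))
      obtain ⟨b, -, rfl⟩ := mem_map.mp (he y (Sym2.mem_mk_right _ y))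
      exact ⟨s(a, b), rfl⟩
  rw [edgesIn, edgesIn, hpre,
    Set.ncard_preimage_of_injective_subset_range (Sym2.map.injective f.injective) hrange]

lemma contractMinus_graphState {W : Type} [Fintype W] [DecidableEq W] (H : SimpleGraph W)
    [DecidableRel H.Adj] (w : W) (S : Finset {x // x ≠ w}) :
    contractMinus w (graphState H) S =
      (-1) ^ edgesIn H (S.map (.subtype _)) * (1 - (-1) ^ #{x ∈ S.map (.subtype _) | H.Adj w x})
        / ((Real.sqrt 2 : ℝ) : ℂ) ^ (Fintype.card W + 1) := by
  have hw : w ∉ S.map (.subtype _) := by simp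
  rw [contractMinus, graphState, graphState, edgesIn_insert H hw, pow_add, pow_add, pow_one,
    div_sub_div_same, div_div]
  ring

section
variable {V' : Type} (G' : SimpleGraph V') (u : V') (A A' : Finset V')

lemma bigG_adj_inr_inl (i : Fin 3) (a : {x : V' // x ≠ u}) :
    (bigG G' u A A').Adj (.inr i) (.inl a) ↔ i = 0 ∧ a.val ∈ A ∨ i = 2 ∧ a.val ∈ A' := by
  simp [bigG, bigRel]

lemma bigG_adj_inr_inr (i j : Fin 3) :
    (bigG G' u A A').Adj (.inr i) (.inr j) ↔ i ≠ j ∧ (i = 1 ∨ j = 1) := by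
  fin_cases i <;> fin_cases j <;> simp [bigG, bigRel]

lemma bigG_comap_inl : (bigG G' u A A').comap Function.Embedding.inl = G'.comap Subtype.val := by
  ext a b
  simp only [SimpleGraph.comap_adj, Function.Embedding.inl_apply, bigG, SimpleGraph.fromRel_adj,
    bigRel, G'.adj_comm b, or_self]
  exact and_iff_right_of_imp fun h hab => h.ne (congrArg Subtype.val (Sum.inl_injective hab))

lemma map_subtype_eq_union [Fintype V'] [DecidableEq V'] (T : Finset (RemVert V' u)) :
    T.map (.subtype _) = (restrictT u T).map .inl ∪
      (if vVert V' u ∈ T then {.inr 0} else ∅) ∪ (if v'Vert V' u ∈ T then {.inr 2} else ∅) := by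
  unfold vVert v'Vert
  ext (a | i) <;> [skip; fin_cases i] <;> split_ifs <;> simp_all [restrictT]

end

theorem contractMinus_w_graphState_general
    {V' : Type} [Fintype V'] [DecidableEq V'] (G' : SimpleGraph V') (u : V')
    (A A' : Finset V') :
    contractMinus (wVert V' u) (graphState (bigG G' u A A')) =
      fun T : Finset (RemVert V' u) =>
        (extendVV u true false
           (Zop (Finset.univ.filter fun a : {x : V' // x ≠ u} => a.val ∈ A)
             (graphState (SimpleGraph.comap Subtype.val G'))) T +
         extendVV u false true
           (Zop (Finset.univ.filter fun a : {x : V' // x ≠ u} => a.val ∈ A')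
             (graphState (SimpleGraph.comap Subtype.val G'))) T) / 2 := by
  classical
  funext T
  have hnorm (n : ℕ) : ((Real.sqrt 2 : ℝ) : ℂ) ^ (n + 3 + 1) = 4 * ((Real.sqrt 2 : ℝ) : ℂ) ^ n := by
    have hsq : ((Real.sqrt 2 : ℝ) : ℂ) ^ 2 = 2 := by norm_cast; exact Real.sq_sqrt zero_le_two
    linear_combination (((Real.sqrt 2 : ℝ) : ℂ) ^ n * (((Real.sqrt 2 : ℝ) : ℂ) ^ 2 + 2)) * hsq
  rw [contractMinus_graphState, map_subtype_eq_union, Fintype.card_sum, Fintype.card_fin, hnorm]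
  by_cases hv : vVert V' u ∈ T <;> by_cases hv' : v'Vert V' u ∈ T <;>
    simp [hv, hv', extendVV, Zop, graphState, edgesIn_insert, edgesIn_map, bigG_comap_inl,
      bigG_adj_inr_inl, bigG_adj_inr_inr, filter_insert, filter_map, filter_inter]
  all_goals ring

/-- Let the neighborhood of `u` in `G'` be partitioned as `A ⊔ A'`, let
`Ḡ` be the induced subgraph of `G'` on `V(G') \ {u}`, and let `G` be the graph obtained
by replacing `u` by the path `v - w - v'` as above.  Contracting the qubit `w` of `|G⟩`
against `|−⟩` gives
`⟨−|_w |G⟩ = (1/2)·(|1⟩_v |0⟩_{v'} ⊗ Z[A] |Ḡ⟩ + |0⟩_v |1⟩_{v'} ⊗ Z[A'] |Ḡ⟩)`. -/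
theorem contractMinus_w_graphState
    {V' : Type} [Fintype V'] [DecidableEq V'] (G' : SimpleGraph V') (u : V')
    (A A' : Finset V') (hN : (↑A ∪ ↑A' : Set V') = G'.neighborSet u)
    (hdisj : Disjoint A A') :
    contractMinus (wVert V' u) (graphState (bigG G' u A A')) =
      fun T : Finset (RemVert V' u) =>
        (extendVV u true false
           (Zop (Finset.univ.filter fun a : {x : V' // x ≠ u} => a.val ∈ A)
             (graphState (SimpleGraph.comap Subtype.val G'))) T +
         extendVV u false true
           (Zop (Finset.univ.filter fun a : {x : V' // x ≠ u} => a.val ∈ A')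
             (graphState (SimpleGraph.comap Subtype.val G'))) T) / 2 :=
  contractMinus_w_graphState_general G' u A A'
end
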